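/- arXiv:1710.01472 — 2 statements merged into one kernel-verified Lean document; each statement's English description precedes it below -/
import Mathlib

section
/- Let b ≥ 1 and define f : ℕ → ℕ by f(1) = 0 and f(s) = ⌊(s/(s-1)) · (f(s-1) + b)⌋ for s ≥ 2. Then for all s ≥ 1, f(s) ≥ (b-1) · s · ∑_{i=1}^{s-1} (1/i), where the sum is taken over the reals. -/
lemma sum_Icc_one_div_pred_add (s : ℕ) (hs : 1 ≤ s) :
    ∑ i ∈ Finset.Icc 1 s, (1 : ℝ) / i = ∑ i ∈ Finset.Icc 1 (s - 1), (1 : ℝ) / i + 1 / s := by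
  obtain ⟨m, rfl⟩ := Nat.exists_eq_add_of_le' hs
  simp only [Nat.add_sub_cancel]
  exact Finset.sum_Icc_succ_top (by omega) _

/-- The bound `(b - 1) s H` itself satisfies the recurrence up to an error `1 + 1/s`, so the
`- 1` lost to the floor leaves slack `1/s`. -/
lemma harmonic_bound_step (b H x s : ℝ) (hs : 0 < s) (h : (b - 1) * s * H ≤ x) :
    (b - 1) * (s + 1) * (H + 1 / s) ≤ (s + 1) / s * (x + b) - 1 := by
  have hgap : (s + 1) / s * (x + b) - 1 - (b - 1) * (s + 1) * (H + 1 / s)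
      = (s + 1) / s * (x - (b - 1) * s * H) + 1 / s := by
    field_simp
    ring
  have : 0 ≤ (s + 1) / s * (x - (b - 1) * s * H) + 1 / s := by
    have := sub_nonneg.mpr h
    positivity
  linarith

theorem stmt_0_general (b : ℕ) (f : ℕ → ℕ)
    (hf1 : f 1 = 0)
    (hfrec : ∀ s : ℕ, 2 ≤ s →
      f s = Nat.floor (((s : ℝ) / ((s : ℝ) - 1)) * ((f (s - 1) : ℝ) + (b : ℝ)))) :
    ∀ s : ℕ, 1 ≤ s →
      ((b : ℝ) - 1) * (s : ℝ) * (∑ i ∈ Finset.Icc 1 (s - 1), (1 : ℝ) / (i : ℝ)) ≤ (f s : ℝ) := by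
  intro s hs
  induction s, hs using Nat.le_induction with
  | base => simp [hf1]
  | succ s hs ih =>
    have hrec := hfrec (s + 1) (by omega)
    simp only [Nat.add_sub_cancel, Nat.cast_add_one, add_sub_cancel_right] at hrec
    have hfloor := hrec ▸ Nat.sub_one_lt_floor ((s + 1 : ℝ) / s * (f s + b))
    rw [Nat.add_sub_cancel, sum_Icc_one_div_pred_add s hs, Nat.cast_add_one]
    have hs' : (0 : ℝ) < s := by exact_mod_cast hs
    exact (harmonic_bound_step _ _ _ _ hs' ih).trans hfloor.le

theorem stmt_0 (b : ℕ) (hb : 1 ≤ b) (f : ℕ → ℕ)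
    (hf1 : f 1 = 0)
    (hfrec : ∀ s : ℕ, 2 ≤ s →
      f s = Nat.floor (((s : ℝ) / ((s : ℝ) - 1)) * ((f (s - 1) : ℝ) + (b : ℝ)))) :
    ∀ s : ℕ, 1 ≤ s →
      ((b : ℝ) - 1) * (s : ℝ) * (∑ i ∈ Finset.Icc 1 (s - 1), (1 : ℝ) / (i : ℝ)) ≤ (f s : ℝ) :=
  stmt_0_general b f hf1 hfrec
end

section
/- Let Δ ≥ 2 and b ≥ 2 be integers and let G be a Δ-regular finite simple graph on n vertices. Then there exists a set F of edges of G of size at least n / (2Δ³) such that any two distinct edges of F are at distance at least 4 in G (i.e., every path connecting them has at least three internal vertices, or they lie in different components). -/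
open Finset SimpleGraph

section Aux

variable {V : Type*} [Fintype V] [DecidableEq V] (G : SimpleGraph V) [DecidableRel G.Adj]

/-- Two edges are close if some endpoints are at distance ≤ 2. -/
def Close (e f : Sym2 V) : Prop :=
  ∃ a b : V, a ∈ e ∧ b ∈ f ∧ G.Reachable a b ∧ G.dist a b ≤ 2

lemma close_symm {e f : Sym2 V} (h : Close G e f) : Close G f e := by
  obtain ⟨a, b, ha, hb, hr, hd⟩ := h
  exact ⟨b, a, hb, ha, hr.symm, by rwa [G.dist_comm]⟩

lemma close_self {e : Sym2 V} (he : e ∈ G.edgeSet) : Close G e e := by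
  induction e with
  | _ x y =>
    exact ⟨x, x, Sym2.mem_mk_left x y, Sym2.mem_mk_left x y, Reachable.refl x, by rw [G.dist_self]; omega⟩

/-- A finite superset of the ball of radius 2 around the edge {a,b}. -/
def Ball2 (a b : V) : Finset V :=
  {a, b} ∪ (G.neighborFinset a).erase b ∪ (G.neighborFinset b).erase a
    ∪ ((G.neighborFinset a).erase b).biUnion (fun u => G.neighborFinset u)
    ∪ ((G.neighborFinset b).erase a).biUnion (fun u => G.neighborFinset u)

lemma ball2_comm (a b : V) : Ball2 G a b = Ball2 G b a := by
  ext v; simp only [Ball2, mem_union, mem_insert, mem_singleton]; tauto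

lemma mem_ball2_of_walk {a b v : V} (p : G.Walk a v) (hlen : p.length ≤ 2) :
    v ∈ Ball2 G a b := by
  match p with
  | .nil =>
      simp [Ball2]
  | .cons (v := u) h .nil =>
      rcases eq_or_ne u b with rfl | hub
      · simp [Ball2]
      · simp only [Ball2, mem_union]
        left; left; left; right
        simp [mem_erase, hub, h]
  | .cons (v := u) h (.cons (v := w) h' .nil) =>
      rcases eq_or_ne u b with rfl | hub
      · rcases eq_or_ne w a with rfl | hwa
        · simp [Ball2]
        · simp only [Ball2, mem_union]
          left; left; right
          simp [mem_erase, hwa, h']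
      · simp only [Ball2, mem_union]
        left; right
        exact mem_biUnion.2 ⟨u, by simp [mem_erase, hub, h], by simp [h']⟩
  | .cons _ (.cons _ (.cons _ _)) =>
      simp [Walk.length_cons] at hlen

lemma mem_ball2 {a b v : V} (hr : G.Reachable a v) (hd : G.dist a v ≤ 2) :
    v ∈ Ball2 G a b := by
  obtain ⟨p, hp⟩ := hr.exists_walk_length_eq_dist
  exact mem_ball2_of_walk G p (hp ▸ hd)

lemma card_ball2_le {Δ : ℕ} (hΔ : 2 ≤ Δ) (hreg : G.IsRegularOfDegree Δ)
    {a b : V} (hab : G.Adj a b) : (Ball2 G a b).card ≤ 2 * Δ ^ 2 := by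
  have hNa : ((G.neighborFinset a).erase b).card = Δ - 1 := by
    rw [card_erase_of_mem (by simp [hab]), card_neighborFinset_eq_degree, hreg a]
  have hNb : ((G.neighborFinset b).erase a).card = Δ - 1 := by
    rw [card_erase_of_mem (by simp [hab.symm]), card_neighborFinset_eq_degree, hreg b]
  have hbu : ∀ s : Finset V, s.card = Δ - 1 →
      (s.biUnion (fun u => G.neighborFinset u)).card ≤ (Δ - 1) * Δ := by
    intro s hs
    calc (s.biUnion (fun u => G.neighborFinset u)).card ≤ ∑ u ∈ s, (G.neighborFinset u).card :=
          card_biUnion_le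
      _ = (Δ - 1) * Δ := by
          rw [← hs, ← smul_eq_mul, ← Finset.sum_const]
          exact Finset.sum_congr rfl fun u _ => by
            rw [card_neighborFinset_eq_degree, hreg u]
  have h1 := hbu _ hNa
  have h2 := hbu _ hNb
  have hpair : ({a, b} : Finset V).card ≤ 2 := card_insert_le _ _ |>.trans (by simp)
  have := card_union_le
    ({a, b} ∪ (G.neighborFinset a).erase b ∪ (G.neighborFinset b).erase a
      ∪ ((G.neighborFinset a).erase b).biUnion (fun u => G.neighborFinset u))
    (((G.neighborFinset b).erase a).biUnion (fun u => G.neighborFinset u))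
  have h3 := card_union_le
    ({a, b} ∪ (G.neighborFinset a).erase b ∪ (G.neighborFinset b).erase a)
    (((G.neighborFinset a).erase b).biUnion (fun u => G.neighborFinset u))
  have h4 := card_union_le ({a, b} ∪ (G.neighborFinset a).erase b)
    ((G.neighborFinset b).erase a)
  have h5 := card_union_le ({a, b} : Finset V) ((G.neighborFinset a).erase b)
  unfold Ball2
  obtain ⟨m, rfl⟩ : ∃ m, Δ = m + 2 := ⟨Δ - 2, by omega⟩
  have hm : m + 2 - 1 = m + 1 := rfl
  rw [hm] at h1 h2 hNa hNb
  rw [hNa] at h5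
  nlinarith [this, h3, h4, h5, h1, h2, hNa, hNb, hpair]

end Aux

section Greedy

variable {V : Type*} [Fintype V] [DecidableEq V] (G : SimpleGraph V) [DecidableRel G.Adj]

open scoped Classical in
lemma killed_card_le {Δ : ℕ} (hΔ : 2 ≤ Δ) (hreg : G.IsRegularOfDegree Δ)
    {e : Sym2 V} (he : e ∈ G.edgeFinset) :
    (G.edgeFinset.filter (fun f => Close G e f)).card ≤ 2 * Δ ^ 3 := by
  induction e with
  | _ a b =>
    have hab : G.Adj a b := by simpa using he
    have hsub : G.edgeFinset.filter (fun f => Close G s(a,b) f) ⊆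
        (Ball2 G a b).biUnion (fun c => G.incidenceFinset c) := by
      intro f hf
      rw [mem_filter] at hf
      obtain ⟨hfE, a', b', ha', hb', hr, hd⟩ := hf
      have hball : b' ∈ Ball2 G a b := by
        rcases Sym2.mem_iff.1 ha' with rfl | rfl
        · exact mem_ball2 G hr hd
        · rw [ball2_comm]; exact mem_ball2 G hr hd
      refine mem_biUnion.2 ⟨b', hball, ?_⟩
      rw [mem_incidenceFinset]
      exact ⟨mem_edgeFinset.mp hfE, hb'⟩
    calc (G.edgeFinset.filter (fun f => Close G s(a,b) f)).card
        ≤ ((Ball2 G a b).biUnion (fun c => G.incidenceFinset c)).card :=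
          card_le_card hsub
      _ ≤ ∑ c ∈ Ball2 G a b, (G.incidenceFinset c).card := card_biUnion_le
      _ = (Ball2 G a b).card * Δ := by
          rw [← smul_eq_mul, ← Finset.sum_const]
          exact Finset.sum_congr rfl fun c _ => by
            rw [card_incidenceFinset_eq_degree, hreg c]
      _ ≤ 2 * Δ ^ 2 * Δ := by
          exact Nat.mul_le_mul_right _ (card_ball2_le G hΔ hreg hab)
      _ = 2 * Δ ^ 3 := by ring

open scoped Classical in
lemma greedy {K : ℕ}
    (hkill : ∀ e ∈ G.edgeFinset, (G.edgeFinset.filter (fun f => Close G e f)).card ≤ K)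
    (S : Finset (Sym2 V)) (hS : S ⊆ G.edgeFinset) :
    ∃ F : Finset (Sym2 V), F ⊆ S ∧ S.card ≤ F.card * K ∧
      ∀ e ∈ F, ∀ f ∈ F, e ≠ f → ¬ Close G e f := by
  induction S using Finset.strongInduction with
  | _ S ih =>
    rcases S.eq_empty_or_nonempty with rfl | ⟨e, heS⟩
    · exact ⟨∅, by simp⟩
    · have heE : e ∈ G.edgeFinset := hS heS
      set D := S.filter (fun f => Close G e f) with hD
      have heD : e ∈ D := mem_filter.2 ⟨heS, close_self G (mem_edgeFinset.mp heE)⟩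
      set S' := S \ D with hS'
      have hssub : S' ⊂ S := by
        constructor
        · exact sdiff_subset
        · intro hsub
          exact (mem_sdiff.1 (hsub heS)).2 heD
      obtain ⟨F', hF'sub, hF'card, hF'far⟩ := ih S' hssub (sdiff_subset.trans hS)
      have heF' : e ∉ F' := fun h => (mem_sdiff.1 (hF'sub h)).2 heD
      refine ⟨insert e F', ?_, ?_, ?_⟩
      · intro f hf
        rcases mem_insert.1 hf with rfl | hf
        · exact heS
        · exact sdiff_subset (hF'sub hf)
      · have hDK : D.card ≤ K :=
          le_trans (card_le_card (filter_subset_filter _ hS)) (hkill e heE)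
        have hDS : D.card ≤ S.card := hD ▸ card_le_card (filter_subset _ _)
        have : S.card ≤ S'.card + D.card := by
          rw [hS', card_sdiff_of_subset (hD ▸ filter_subset _ _)]
          omega
        rw [card_insert_of_notMem heF']
        calc S.card ≤ S'.card + D.card := this
          _ ≤ F'.card * K + K := Nat.add_le_add hF'card hDK
          _ = (F'.card + 1) * K := by ring
      · intro f hf g hg hfg
        have key : ∀ f ∈ F', ¬ Close G e f := by
          intro f hf hc
          exact (mem_sdiff.1 (hF'sub hf)).2 (mem_filter.2 ⟨(mem_sdiff.1 (hF'sub hf)).1, hc⟩)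
        rcases mem_insert.1 hf with hfe | hf'
        · rcases mem_insert.1 hg with hge | hg'
          · exact absurd (hfe.trans hge.symm) hfg
          · rw [hfe]; exact key g hg'
        · rcases mem_insert.1 hg with hge | hg'
          · rw [hge]; exact fun hc => key f hf' (close_symm G hc)
          · exact hF'far f hf' g hg' hfg

end Greedy

theorem stmt_7 {V : Type*} [Fintype V] [DecidableEq V]
    (G : SimpleGraph V) [DecidableRel G.Adj] (Δ b : ℕ) (hΔ : 2 ≤ Δ) (hb : 2 ≤ b)
    (hreg : G.IsRegularOfDegree Δ) :
    ∃ F : Finset (Sym2 V), ↑F ⊆ G.edgeSet ∧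
      (Fintype.card V : ℝ) / (2 * (Δ : ℝ) ^ 3) ≤ (F.card : ℝ) ∧
      ∀ e ∈ F, ∀ f ∈ F, e ≠ f →
        ∀ a b : V, a ∈ e → b ∈ f → ¬G.Reachable a b ∨ 3 ≤ G.dist a b := by
  classical
  obtain ⟨F, hFsub, hFcard, hFfar⟩ := greedy G
    (fun e he => killed_card_le G hΔ hreg he) G.edgeFinset (subset_refl _)
  refine ⟨F, ?_, ?_, ?_⟩
  · intro f hf
    exact mem_edgeFinset.mp (hFsub hf)
  · -- counting
    have hsum : ∑ v : V, G.degree v = Fintype.card V * Δ := by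
      rw [Finset.sum_congr rfl (fun v _ => hreg v), Finset.sum_const, smul_eq_mul,
        Finset.card_univ]
    have hdeg : Fintype.card V * Δ = 2 * G.edgeFinset.card := by
      rw [← G.sum_degrees_eq_twice_card_edges, hsum]
    have hnat : Fintype.card V ≤ F.card * (2 * Δ ^ 3) := by
      have h1 : Fintype.card V * Δ ≤ F.card * (2 * Δ ^ 3) * 2 := by
        calc Fintype.card V * Δ = 2 * G.edgeFinset.card := hdeg
          _ ≤ 2 * (F.card * (2 * Δ ^ 3)) := by omega
          _ = F.card * (2 * Δ ^ 3) * 2 := by ring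
      have h2 : F.card * (2 * Δ ^ 3) * 2 ≤ F.card * (2 * Δ ^ 3) * Δ := by
        exact Nat.mul_le_mul_left _ hΔ
      exact Nat.le_of_mul_le_mul_right (h1.trans h2) (by omega)
    rw [div_le_iff₀ (by positivity)]
    calc (Fintype.card V : ℝ) ≤ (F.card * (2 * Δ ^ 3) : ℕ) := by exact_mod_cast hnat
      _ = (F.card : ℝ) * (2 * (Δ : ℝ) ^ 3) := by push_cast; ring
  · intro e he f hf hef a c ha hc
    by_cases hr : G.Reachable a c
    · right
      by_contra hd
      exact hFfar e he f hf hef ⟨a, c, ha, hc, hr, by omega⟩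
    · exact Or.inl hr
end
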